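/- arXiv:2302.06351 — 3 statements merged into one kernel-verified Lean document; each statement's English description precedes it below -/
import Mathlib

section
/- Every finite colored graph (V,E,π) admits a coarsest equitable refinement: there exists an equitable coloring π' refining π such that every equitable coloring refining π also refines into π' (i.e., the partition of π' is coarser than or equal to that of any equitable refinement of π). -/
/-!
The equitable partitions refining `π` are closed under arbitrary joins. If `p` is equitable and
`f` is constant on `p`-classes, then the sum of `f` over the neighbours of `v` depends only on the
`p`-class of `v`. Take `s` the join of all equitable refinements of `π` and `f` the indicator of an
`s`-class: the number of neighbours in that class is then invariant under every equitable
refinement, hence under the least equivalence containing them all, which is `s`. So `s` is itself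
equitable, and it is the coarsest one.
-/

namespace Sassy

/-- A coloring is equitable if vertices of the same color have the same number of
neighbors in every color class. -/
def Equitable {V C : Type*} (G : SimpleGraph V) (π : V → C) : Prop :=
  ∀ v w, π v = π w → ∀ c : C,
    {u | G.Adj v u ∧ π u = c}.ncard = {u | G.Adj w u ∧ π u = c}.ncard

/-- `φ` is a color-preserving automorphism of the colored graph `(G, π)`. -/
def IsAut {V C : Type*} (G : SimpleGraph V) (π : V → C) (φ : Equiv.Perm V) : Prop :=
  (∀ v w, G.Adj (φ v) (φ w) ↔ G.Adj v w) ∧ ∀ v, π (φ v) = π v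

/-- The automorphism group of a colored graph, as a subgroup of `Equiv.Perm V`. -/
def Aut {V C : Type*} (G : SimpleGraph V) (π : V → C) : Subgroup (Equiv.Perm V) where
  carrier := {φ | IsAut G π φ}
  one_mem' := ⟨fun _ _ => Iff.rfl, fun _ => rfl⟩
  mul_mem' := by
    rintro a b ⟨ha1, ha2⟩ ⟨hb1, hb2⟩
    refine ⟨fun v w => ?_, fun v => ?_⟩
    · simpa [Equiv.Perm.mul_apply] using (ha1 (b v) (b w)).trans (hb1 v w)
    · simp [Equiv.Perm.mul_apply, ha2, hb2]
  inv_mem' := by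
    rintro a ⟨ha1, ha2⟩
    refine ⟨fun v w => ?_, fun v => ?_⟩
    · conv_rhs => rw [← Equiv.apply_symm_apply a v, ← Equiv.apply_symm_apply a w]
      exact (ha1 _ _).symm
    · conv_rhs => rw [← Equiv.apply_symm_apply a v]
      exact (ha2 _).symm

end Sassy

open Finset

namespace Sassy

variable {V C D E : Type*} {G : SimpleGraph V}

theorem Equitable.of_ker_eq {σ : V → D} {τ : V → E} (hσ : Equitable G σ)
    (h : Setoid.ker σ = Setoid.ker τ) : Equitable G τ := by
  have hfib : ∀ x y, σ x = σ y ↔ τ x = τ y := fun x y => by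
    rw [← Setoid.ker_def, h, Setoid.ker_def]
  intro v w hvw c
  by_cases hc : ∃ u, τ u = c
  · obtain ⟨u₀, rfl⟩ := hc
    have hclass : ∀ x, {u | G.Adj x u ∧ τ u = τ u₀} = {u | G.Adj x u ∧ σ u = σ u₀} := by
      intro x
      simp only [hfib]
    rw [hclass, hclass]
    exact hσ v w ((hfib v w).mpr hvw) (σ u₀)
  · push Not at hc
    simp [hc]

theorem Equitable.sum_adj_eq [Fintype V] [DecidableRel G.Adj] [DecidableEq D] {M : Type*}
    [AddCommMonoid M] {σ : V → D} (hσ : Equitable G σ) {f : V → M}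
    (hf : ∀ x y, σ x = σ y → f x = f y) {v w : V} (hvw : σ v = σ w) :
    ∑ u with G.Adj v u, f u = ∑ u with G.Adj w u, f u := by
  have hclass : ∀ x r, ∑ u with G.Adj x u ∧ σ u = σ r, f u =
      {u | G.Adj x u ∧ σ u = σ r}.ncard • f r := by
    intro x r
    rw [sum_congr rfl fun u hu => hf u r (mem_filter.mp hu).2.2, sum_const,
      Set.ncard_eq_toFinset_card', Set.toFinset_ofPred]
  have hmaps : ∀ x, ∀ u ∈ ({u | G.Adj x u} : Finset V), σ u ∈ univ.image σ :=
    fun _ u _ => mem_image_of_mem σ (mem_univ u)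
  rw [← sum_fiberwise_of_maps_to (hmaps v), ← sum_fiberwise_of_maps_to (hmaps w)]
  refine sum_congr rfl fun d hd => ?_
  obtain ⟨r, -, rfl⟩ := mem_image.mp hd
  rw [filter_filter, filter_filter, hclass, hclass, hσ v w hvw]

theorem Equitable.ncard_adj_eq_of_ker_le [Fintype V] {σ : V → D} {τ : V → E}
    (hσ : Equitable G σ) (hστ : Setoid.ker σ ≤ Setoid.ker τ) {v w : V} (hvw : σ v = σ w)
    (c : E) : {u | G.Adj v u ∧ τ u = c}.ncard = {u | G.Adj w u ∧ τ u = c}.ncard := by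
  classical
  simp only [Set.ncard_eq_toFinset_card', Set.toFinset_ofPred, ← filter_filter, card_filter]
  exact hσ.sum_adj_eq (fun x y hxy => by rw [show τ x = τ y from hστ hxy]) hvw

variable (G) (π : V → C)

def equitableRefinements : Set (Setoid V) :=
  {p | Equitable G (Quotient.mk p) ∧ p ≤ Setoid.ker π}

def coarsestEquitableRefinement : Setoid V :=
  sSup (equitableRefinements G π)

theorem coarsestEquitableRefinement_le_ker : coarsestEquitableRefinement G π ≤ Setoid.ker π :=
  sSup_le fun _ hp => hp.2

theorem ker_le_coarsestEquitableRefinement {σ : V → D} (hσ : Equitable G σ)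
    (hσπ : Setoid.ker σ ≤ Setoid.ker π) : Setoid.ker σ ≤ coarsestEquitableRefinement G π :=
  le_sSup ⟨hσ.of_ker_eq (Setoid.ker_mk_eq _).symm, hσπ⟩

theorem equitable_coarsestEquitableRefinement [Fintype V] :
    Equitable G (Quotient.mk (coarsestEquitableRefinement G π)) := by
  set s := coarsestEquitableRefinement G π
  intro v w hvw c
  have : s ≤ Setoid.ker fun x => {u | G.Adj x u ∧ Quotient.mk s u = c}.ncard :=
    sSup_le fun p hp => Setoid.le_def.mpr fun hxy =>
      hp.1.ncard_adj_eq_of_ker_le (by rw [Setoid.ker_mk_eq, Setoid.ker_mk_eq]; exact le_sSup hp)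
        (Quotient.sound hxy) c
  exact this (Quotient.exact hvw)

end Sassy

/-- Every finite colored graph admits a coarsest equitable refinement. -/
theorem stmt1 {V C : Type*} [Fintype V] (G : SimpleGraph V) (π : V → C) :
    ∃ π' : V → ℕ,
      Sassy.Equitable G π' ∧ (∀ v w, π' v = π' w → π v = π w) ∧
      ∀ (D : Type*) (σ : V → D), Sassy.Equitable G σ → (∀ v w, σ v = σ w → π v = π w) →
        ∀ v w, σ v = σ w → π' v = π' w := by
  set s := Sassy.coarsestEquitableRefinement G π
  obtain ⟨e, he⟩ := (countable_iff_exists_injective (Quotient s)).mp inferInstance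
  have hker : Setoid.ker (e ∘ Quotient.mk s) = s := by
    ext x y
    rw [Setoid.ker_def, Function.comp_apply, Function.comp_apply, he.eq_iff, Quotient.eq]
  refine ⟨e ∘ Quotient.mk s, ?_, fun v w h => ?_, fun D σ hσ hσπ v w hvw => ?_⟩
  · exact (Sassy.equitable_coarsestEquitableRefinement G π).of_ker_eq
      (by rw [Setoid.ker_mk_eq, hker])
  · exact Sassy.coarsestEquitableRefinement_le_ker G π (hker.le h)
  · exact hker.ge (Sassy.ker_le_coarsestEquitableRefinement G π hσ (fun x y => hσπ x y) hvw)
end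

section
/- Let G=(V,E,π) be a colored graph with equitable coloring π, and let C be a color class in which every vertex has degree 1 with all neighbors lying in a distinct color class P. Partition C into C₁,…,C_m where C_i is the set of vertices of C adjacent to p_i ∈ P. Let G' = G minus C (with coloring restricted). Then: (1) every automorphism of G restricts to an automorphism of G'; (2) every automorphism of G' lifts to an automorphism of G (necessarily |C_i| = |C_j| whenever a lift is required to map p_i to p_j, and this holds since π is equitable); and (3) the kernel of the restriction homomorphism Aut(G) → Aut(G') is isomorphic to the direct product of the symmetric groups Sym(C_i), i=1,…,m. -/
/-!
A vertex of class `c` has exactly one neighbour, and it lies in class `cP`; so `V` splits into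
the vertices outside `c` and the fibres `C_q = {v ∈ c | v ~ q}`, `q ∈ cP`. An automorphism of `G`
is determined by its restriction `ψ` to `G' = G.induce {v | π v ≠ c}` together with the
bijections `C_q → C_{ψ q}` it induces. Conversely, an automorphism `ψ` of `G'` glues with
arbitrary bijections `C_q → C_{ψ q}` to an automorphism of `G`, because the only edges at `c` are
the pendant edges `v ~ q` and these are respected by construction; equitability makes all fibres
the same size, so such bijections exist. For `ψ = 1` the gluing data is exactly a permutation of
every fibre, which identifies the kernel of the restriction.
-/

open Equiv

lemma SimpleGraph.exists_forall_adj_iff_of_ncard_neighborSet_eq_one {V : Type*}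
    {G : SimpleGraph V} {v : V} (h : (G.neighborSet v).ncard = 1) :
    ∃ u, ∀ w, G.Adj v w ↔ w = u := by
  obtain ⟨u, hu⟩ := Set.ncard_eq_one.mp h
  exact ⟨u, fun w => by rw [← G.mem_neighborSet, hu, Set.mem_singleton_iff]⟩

namespace Sassy

variable {V C : Type*} {G : SimpleGraph V} {π : V → C}

lemma Equitable.nonempty_adj_subtype_equiv [Finite V] (h : Equitable G π) {r r' : V}
    (hr : π r = π r') (c : C) :
    Nonempty ({v // π v = c ∧ G.Adj v r} ≃ {v // π v = c ∧ G.Adj v r'}) := by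
  have card_eq : ∀ r : V, Nat.card {v // π v = c ∧ G.Adj v r} = {u | G.Adj r u ∧ π u = c}.ncard :=
    fun r => by
      rw [← Nat.card_coe_set_eq]
      exact Nat.card_congr (subtypeEquivRight fun u => by
        simp only [Set.mem_ofPred_eq, G.adj_comm r u, and_comm])
  exact Finite.card_eq.mp (by rw [card_eq, card_eq, h r r' hr c])

variable (G π) in
def restrictAut (c : C) :
    Aut G π →* Aut (G.induce {v : V | π v ≠ c}) (fun v => π v.1) where
  toFun φ := ⟨φ.1.subtypePerm fun v => not_congr (by rw [φ.2.2 v]),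
    fun v w => φ.2.1 v.1 w.1, fun v => φ.2.2 v.1⟩
  map_one' := rfl
  map_mul' _ _ := rfl

lemma apply_eq_self_of_mem_ker_restrictAut {c : C} {φ : Aut G π}
    (hφ : φ ∈ (restrictAut G π c).ker) {v : V} (hv : π v ≠ c) : φ.1 v = v :=
  congrArg Subtype.val (Perm.ext_iff.mp (congrArg Subtype.val hφ) ⟨v, hv⟩)

def permClassOfAut {c cP : C} (hne : c ≠ cP)
    (ψ : Aut (G.induce {v : V | π v ≠ c}) (fun v => π v.1)) : Perm {w // π w = cP} where
  toFun q := ⟨ψ.1 ⟨q.1, q.2.trans_ne hne.symm⟩, (ψ.2.2 _).trans q.2⟩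
  invFun q := ⟨(ψ⁻¹).1 ⟨q.1, q.2.trans_ne hne.symm⟩, ((ψ⁻¹).2.2 _).trans q.2⟩
  left_inv q := by simp
  right_inv q := by simp

variable (G π) in
def kerRestrictAutToPermFiber {c cP : C} (hne : c ≠ cP) :
    (restrictAut G π c).ker →* ∀ q : {w // π w = cP}, Perm {v // π v = c ∧ G.Adj v q.1} where
  toFun φ q := φ.1.1.subtypePerm fun v => by
    have hadj := φ.1.2.1 v q
    rw [apply_eq_self_of_mem_ker_restrictAut φ.2 (q.2.trans_ne hne.symm)] at hadj
    rw [φ.1.2.2 v, hadj]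
  map_one' := rfl
  map_mul' _ _ := rfl

/-- A vertex of `c` has a single neighbour, so once `Φ` maps that pendant edge to an edge, `Φ`
preserves every adjacency at the vertex. -/
lemma isAut_of_map_pendant_adj {c : C} (hdeg : ∀ v, π v = c → (G.neighborSet v).ncard = 1)
    (Φ : Perm V) (hcol : ∀ v, π (Φ v) = π v)
    (hout : ∀ v w, π v ≠ c → π w ≠ c → (G.Adj (Φ v) (Φ w) ↔ G.Adj v w))
    (hpend : ∀ v w, π v = c → G.Adj v w → G.Adj (Φ v) (Φ w)) : IsAut G π Φ := by
  have pendant : ∀ v w, π v = c → (G.Adj (Φ v) (Φ w) ↔ G.Adj v w) := by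
    intro v w hv
    obtain ⟨u, hu⟩ := G.exists_forall_adj_iff_of_ncard_neighborSet_eq_one (hdeg v hv)
    obtain ⟨u', hu'⟩ :=
      G.exists_forall_adj_iff_of_ncard_neighborSet_eq_one (hdeg (Φ v) ((hcol v).trans hv))
    refine ⟨fun h => ?_, hpend v w hv⟩
    have hΦu : Φ w = Φ u := ((hu' _).mp h).trans ((hu' _).mp (hpend v u hv ((hu u).mpr rfl))).symm
    exact (hu w).mpr (Φ.injective hΦu)
  refine ⟨fun v w => ?_, hcol⟩
  by_cases hv : π v = c
  · exact pendant v w hv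
  by_cases hw : π w = c
  · rw [G.adj_comm, pendant w v hw, G.adj_comm]
  · exact hout v w hv hw

section Pendant

variable {c cP : C} (hne : c ≠ cP) (hdeg : ∀ v, π v = c → (G.neighborSet v).ncard = 1)
  (hnbr : ∀ v w, π v = c → G.Adj v w → π w = cP)

noncomputable def pendantParent (v : {v // π v = c}) : {w // π w = cP} :=
  ⟨_, hnbr _ _ v.2 ((G.exists_forall_adj_iff_of_ncard_neighborSet_eq_one (hdeg v v.2)).choose_spec
    _ |>.mpr rfl)⟩

lemma adj_iff_eq_pendantParent (v : {v // π v = c}) (w : V) :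
    G.Adj v w ↔ w = (pendantParent hdeg hnbr v).1 :=
  (G.exists_forall_adj_iff_of_ncard_neighborSet_eq_one (hdeg v v.2)).choose_spec w

lemma pendantParent_eq_of_adj {v : V} (hv : π v = c) {q : {w // π w = cP}} (hvq : G.Adj v q.1) :
    pendantParent hdeg hnbr ⟨v, hv⟩ = q :=
  Subtype.ext ((adj_iff_eq_pendantParent hdeg hnbr ⟨v, hv⟩ q.1).mp hvq).symm

noncomputable def classEquivSigmaFiber :
    {v // π v = c} ≃ Σ q : {w // π w = cP}, {v // π v = c ∧ G.Adj v q.1} where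
  toFun v := ⟨pendantParent hdeg hnbr v,
    ⟨v.1, v.2, (adj_iff_eq_pendantParent hdeg hnbr v _).mpr rfl⟩⟩
  invFun x := ⟨x.2.1, x.2.2.1⟩
  left_inv _ := rfl
  right_inv := by
    rintro ⟨q, v, hv, hvq⟩
    obtain rfl := pendantParent_eq_of_adj hdeg hnbr hv hvq
    rfl

open Classical in
/-- The permutation of `V` that acts as `ψS` outside `c` and maps the fibre over `q` to the fibre
over `ψP q` via `E q`. -/
noncomputable def liftPerm (ψP : Perm {w // π w = cP})
    (E : ∀ q, {v // π v = c ∧ G.Adj v q.1} ≃ {v // π v = c ∧ G.Adj v (ψP q).1})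
    (ψS : Perm {v // π v ≠ c}) : Perm V :=
  ((classEquivSigmaFiber hdeg hnbr).symm.permCongr (sigmaCongr ψP E)).subtypeCongr ψS

section Lift

variable (ψP : Perm {w // π w = cP})
  (E : ∀ q, {v // π v = c ∧ G.Adj v q.1} ≃ {v // π v = c ∧ G.Adj v (ψP q).1})
  (ψS : Perm {v // π v ≠ c})

lemma liftPerm_apply_of_ne {v : V} (hv : π v ≠ c) :
    liftPerm hdeg hnbr ψP E ψS v = (ψS ⟨v, hv⟩).1 := by
  classical exact Perm.subtypeCongr.right_apply (p := (π · = c)) _ _ hv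

lemma liftPerm_apply_of_fiber (q : {w // π w = cP}) (x : {v // π v = c ∧ G.Adj v q.1}) :
    liftPerm hdeg hnbr ψP E ψS x.1 = (E q x).1 := by
  obtain ⟨v, hv, hvq⟩ := x
  obtain rfl := pendantParent_eq_of_adj hdeg hnbr hv hvq
  classical exact Perm.subtypeCongr.left_apply (p := (π · = c)) _ _ hv

lemma liftPerm_mem_aut (hψS : ψS ∈ Aut (G.induce {v : V | π v ≠ c}) (fun v => π v.1))
    (hPS : ∀ q : {w // π w = cP}, (ψS ⟨q.1, q.2.trans_ne hne.symm⟩).1 = (ψP q).1) :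
    liftPerm hdeg hnbr ψP E ψS ∈ Aut G π := by
  refine isAut_of_map_pendant_adj hdeg _ (fun v => ?_) (fun v w hv hw => ?_) fun v w hv hvw => ?_
  · by_cases hv : π v = c
    · let x : {u // π u = c ∧ G.Adj u _} :=
        ⟨v, hv, (adj_iff_eq_pendantParent hdeg hnbr ⟨v, hv⟩ _).mpr rfl⟩
      rw [liftPerm_apply_of_fiber hdeg hnbr ψP E ψS _ x]
      exact (E _ x).2.1.trans hv.symm
    · rw [liftPerm_apply_of_ne hdeg hnbr ψP E ψS hv]
      exact hψS.2 ⟨v, hv⟩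
  · rw [liftPerm_apply_of_ne hdeg hnbr ψP E ψS hv, liftPerm_apply_of_ne hdeg hnbr ψP E ψS hw]
    exact hψS.1 ⟨v, hv⟩ ⟨w, hw⟩
  · have hw : π w ≠ c := (hnbr v w hv hvw).trans_ne hne.symm
    let q : {w // π w = cP} := ⟨w, hnbr v w hv hvw⟩
    rw [liftPerm_apply_of_fiber hdeg hnbr ψP E ψS q ⟨v, hv, hvw⟩,
      liftPerm_apply_of_ne hdeg hnbr ψP E ψS hw, hPS q]
    exact (E q _).2.2

end Lift

include hne hdeg hnbr in
theorem restrictAut_surjective [Finite V] (hequit : Equitable G π) :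
    Function.Surjective (restrictAut G π c) := by
  intro ψ
  let ψP := permClassOfAut hne ψ
  let E : ∀ q : {w // π w = cP}, _ := fun q =>
    (hequit.nonempty_adj_subtype_equiv (q.2.trans (ψP q).2.symm) c).some
  refine ⟨⟨liftPerm hdeg hnbr ψP E ψ.1, liftPerm_mem_aut hne hdeg hnbr ψP E ψ.1 ψ.2 fun _ => rfl⟩,
    Subtype.ext (Perm.ext fun v => Subtype.ext ?_)⟩
  exact liftPerm_apply_of_ne hdeg hnbr ψP E ψ.1 v.2

include hdeg hnbr in
lemma kerRestrictAutToPermFiber_injective :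
    Function.Injective (kerRestrictAutToPermFiber G π hne) := by
  intro φ φ' h
  refine Subtype.ext (Subtype.ext (Perm.ext fun v => ?_))
  by_cases hv : π v = c
  · let q := pendantParent hdeg hnbr ⟨v, hv⟩
    have hvq : G.Adj v q.1 := (adj_iff_eq_pendantParent hdeg hnbr ⟨v, hv⟩ _).mpr rfl
    exact congrArg (fun σ => (σ q ⟨v, hv, hvq⟩).1) h
  · rw [apply_eq_self_of_mem_ker_restrictAut φ.2 hv, apply_eq_self_of_mem_ker_restrictAut φ'.2 hv]

include hdeg hnbr in
lemma kerRestrictAutToPermFiber_surjective :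
    Function.Surjective (kerRestrictAutToPermFiber G π hne) := by
  intro σ
  have hfix : ∀ v (hv : π v ≠ c), liftPerm hdeg hnbr 1 σ 1 v = v :=
    fun v hv => liftPerm_apply_of_ne hdeg hnbr 1 σ 1 hv
  refine ⟨⟨⟨liftPerm hdeg hnbr 1 σ 1, liftPerm_mem_aut hne hdeg hnbr 1 σ 1 (one_mem _)
    fun _ => rfl⟩, Subtype.ext (Perm.ext fun v => Subtype.ext (hfix v.1 v.2))⟩, ?_⟩
  funext q
  exact Perm.ext fun x => Subtype.ext (liftPerm_apply_of_fiber hdeg hnbr 1 σ 1 q x)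

end Pendant

end Sassy

/-- Removing a color class C of degree-1 vertices whose neighbors lie
in a distinct color class P: restriction is a surjective homomorphism onto the
automorphism group of the reduced graph, with kernel the direct product of the
symmetric groups on the fibers C_p = {v ∈ C | v adjacent to p}, p ∈ P. -/
theorem stmt4 {V C : Type*} [Fintype V] (G : SimpleGraph V) (π : V → C)
    (hequit : Sassy.Equitable G π) (c cP : C) (hne : c ≠ cP)
    (hdeg : ∀ v, π v = c → (G.neighborSet v).ncard = 1)
    (hnbr : ∀ v w, π v = c → G.Adj v w → π w = cP) :
    ∃ p : ↥(Sassy.Aut G π) →*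
        ↥(Sassy.Aut (G.induce {v : V | π v ≠ c}) (fun v => π v.1)),
      (∀ (φ : ↥(Sassy.Aut G π)) (v : ↥{v : V | π v ≠ c}), ((p φ).1 v).1 = φ.1 v.1) ∧
      Function.Surjective p ∧
      Nonempty (↥p.ker ≃*
        ((q : {w : V // π w = cP}) → Equiv.Perm {v : V // π v = c ∧ G.Adj v q.1})) :=
  ⟨Sassy.restrictAut G π c, fun _ _ => rfl, Sassy.restrictAut_surjective hne hdeg hnbr hequit,
    ⟨MulEquiv.ofBijective _ ⟨Sassy.kerRestrictAutToPermFiber_injective hne hdeg hnbr,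
      Sassy.kerRestrictAutToPermFiber_surjective hne hdeg hnbr⟩⟩⟩
end

section
/- Let G=(V,E,π) be a colored graph, G'=(V',E',π') a reduced graph with V' ⊆ V, and 𝓡: V → V* a canonical representation mapping. Then the lifting map φ ↦ φ_𝓡 from Aut(G') to Aut(G) is injective and satisfies (φ∘ψ)_𝓡 = φ_𝓡 ∘ ψ_𝓡 on V' whenever both lifted maps agree on represented vertices; in particular, if 𝓡 represents every vertex of V (i.e., each v ∈ V ∖ V' occurs in exactly one representation string), the lifting is a group homomorphism section of the restriction map p: Aut(G) → Aut(G'). -/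
/-!
The hypotheses say that `lift φ` maps each representation string `R v'` letterwise onto
`R (φ v')` (`IsLiftOf`). Since `R v'` starts with `v'`, such a lift restricts to `φ` on `V'`,
which gives injectivity. Lifts compose, and once the strings cover `V` a lift is determined
by `φ`; so `lift (φ * ψ)` and `lift φ * lift ψ`, both lifts of `φ * ψ`, coincide.
-/

namespace Sassy

section IsLiftOf

variable {V : Type*} {V' : Set V} {R : V → List V}

def IsLiftOf (R : V → List V) (f : V → V) (φ : V' → V') : Prop :=
  ∀ v' : V', (R v').map f = R (φ v')

theorem isLiftOf_of_getD {f : V → V} {φ : V' → V'}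
    (hlen : ∀ v' : V', (R (φ v')).length = (R v').length)
    (hrep : ∀ (v' : V') (i : ℕ), i < (R v').length →
      f ((R v').getD i v') = (R (φ v')).getD i v') :
    IsLiftOf R f φ := by
  intro v'
  refine List.ext_getElem (by rw [List.length_map, hlen]) fun i hi hi' => ?_
  rw [List.length_map] at hi
  have := hrep v' i hi
  rwa [List.getD_eq_getElem _ _ hi, List.getD_eq_getElem _ _ hi', ← List.getElem_map f] at this

theorem IsLiftOf.apply_coe (h1 : ∀ v ∈ V', ∃ S : List V, R v = v :: S)
    {f : V → V} {φ : V' → V'} (hf : IsLiftOf R f φ) (v' : V') : f v' = φ v' := by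
  obtain ⟨S, hS⟩ := h1 v' v'.2
  obtain ⟨S', hS'⟩ := h1 (φ v') (φ v').2
  have := hf v'
  rw [hS, hS', List.map_cons, List.cons.injEq] at this
  exact this.1

theorem IsLiftOf.comp {f g : V → V} {φ ψ : V' → V'} (hf : IsLiftOf R f φ)
    (hg : IsLiftOf R g ψ) : IsLiftOf R (f ∘ g) (φ ∘ ψ) := fun v' => by
  rw [← List.map_map, hg v', hf (ψ v'), Function.comp_apply]

theorem IsLiftOf.unique (hcover : ∀ v, ∃ v' : V', v ∈ R v') {f g : V → V} {φ : V' → V'}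
    (hf : IsLiftOf R f φ) (hg : IsLiftOf R g φ) : f = g := by
  funext v
  obtain ⟨v', hv⟩ := hcover v
  exact List.map_inj_left.mp ((hf v').trans (hg v').symm) v hv

theorem exists_mem_rep_of_forall_not_mem (h1 : ∀ v ∈ V', ∃ S : List V, R v = v :: S)
    (hcover : ∀ v ∉ V', ∃ v' : V', v ∈ R v') (v : V) : ∃ v' : V', v ∈ R v' := by
  by_cases hv : v ∈ V'
  · obtain ⟨S, hS⟩ := h1 v hv
    exact ⟨⟨v, hv⟩, hS ▸ List.mem_cons_self⟩
  · exact hcover v hv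

end IsLiftOf

end Sassy

open Sassy in
theorem stmt12_general {V C : Type*} (G : SimpleGraph V) (π : V → C)
    (V' : Set V) (G' : SimpleGraph V') (π' : V' → C) (R : V → List V)
    (h1 : ∀ v ∈ V', ∃ S : List V, R v = v :: S)
    (lift : ↥(Sassy.Aut G' π') → ↥(Sassy.Aut G π))
    (hlen : ∀ (φ : ↥(Sassy.Aut G' π')) (v' : ↥V'),
      (R (φ.1 v').1).length = (R v'.1).length)
    (hlift_rep : ∀ (φ : ↥(Sassy.Aut G' π')) (v' : ↥V') (i : ℕ), i < (R v'.1).length →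
      (lift φ).1 ((R v'.1).getD i v'.1) = (R (φ.1 v').1).getD i v'.1) :
    Function.Injective lift ∧
    ((∀ v ∉ V', ∃ v' : ↥V', v ∈ R v'.1) →
      (∀ φ ψ, lift (φ * ψ) = lift φ * lift ψ) ∧
        ∀ (φ : ↥(Sassy.Aut G' π')) (v' : ↥V'), (lift φ).1 v'.1 = (φ.1 v').1) := by
  have hlift (φ : Aut G' π') : IsLiftOf R (lift φ).1 φ.1 :=
    isLiftOf_of_getD (hlen φ) (hlift_rep φ)
  have hrestrict (φ : Aut G' π') (v' : V') : (lift φ).1 v' = φ.1 v' :=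
    (hlift φ).apply_coe h1 v'
  refine ⟨fun φ ψ h => ?_, fun hcover => ⟨fun φ ψ => ?_, hrestrict⟩⟩
  · refine Subtype.ext (Equiv.ext fun v' => Subtype.ext ?_)
    rw [← hrestrict, ← hrestrict, h]
  · refine Subtype.ext (Equiv.ext (congrFun ?_))
    exact (hlift (φ * ψ)).unique (exists_mem_rep_of_forall_not_mem h1 hcover)
      ((hlift φ).comp (hlift ψ))

/-- For a canonical representation mapping R, the lifting map
φ ↦ φ_R from Aut(G') to Aut(G) is injective; and if R represents every deleted
vertex, the lifting is a multiplicative section of the restriction map. -/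
theorem stmt12 {V C : Type*} [Fintype V] (G : SimpleGraph V) (π : V → C)
    (V' : Set V) (G' : SimpleGraph V') (π' : V' → C) (R : V → List V)
    (h1 : ∀ v ∈ V', ∃ S : List V, R v = v :: S)
    (h2 : ∀ v ∉ V', R v = [])
    (h3 : ∀ v, v ∉ V' → ∀ (v₁ v₂ : ↥V') (i j : ℕ)
      (hi : i < (R v₁.1).length) (hj : j < (R v₂.1).length),
      (R v₁.1).get ⟨i, hi⟩ = v → (R v₂.1).get ⟨j, hj⟩ = v → v₁ = v₂ ∧ i = j)
    (lift : ↥(Sassy.Aut G' π') → ↥(Sassy.Aut G π))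
    (hlen : ∀ (φ : ↥(Sassy.Aut G' π')) (v' : ↥V'),
      (R (φ.1 v').1).length = (R v'.1).length)
    (hlift_rep : ∀ (φ : ↥(Sassy.Aut G' π')) (v' : ↥V') (i : ℕ), i < (R v'.1).length →
      (lift φ).1 ((R v'.1).getD i v'.1) = (R (φ.1 v').1).getD i v'.1)
    (hlift_fix : ∀ (φ : ↥(Sassy.Aut G' π')) (v : V), (∀ v' : ↥V', v ∉ R v'.1) →
      (lift φ).1 v = v) :
    Function.Injective lift ∧
    ((∀ v ∉ V', ∃ v' : ↥V', v ∈ R v'.1) →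
      (∀ φ ψ, lift (φ * ψ) = lift φ * lift ψ) ∧
        ∀ (φ : ↥(Sassy.Aut G' π')) (v' : ↥V'), (lift φ).1 v'.1 = (φ.1 v').1) :=
  stmt12_general G π V' G' π' R h1 lift hlen hlift_rep
end
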